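/- arXiv:1210.3061 — 7 statements merged into one kernel-verified Lean document; each statement's English description precedes it below -/
import Mathlib

section
/- For every natural number n ≥ 2 and every real s ≥ 1, the quantity B(n,s) := ∑_{k=1}^{n} (1/n)·(1 − k/n)^s satisfies B(n,s) ≥ ((n−1)/(2n))^s. -/
/-! The quantity is the mean of `t ↦ t ^ s` over the uniform distribution on the points
`1 - k / n`, `k = 1, …, n`, whose own mean is `(n - 1) / (2 n)`. Since `t ↦ t ^ s` is convex
on `[0, ∞)` for `s ≥ 1`, Jensen's inequality gives the bound. -/

open Finset

lemma sum_Icc_natCast_eq (m : ℕ) : ∑ k ∈ Icc 1 m, (k : ℝ) = m * (m + 1) / 2 := by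
  induction m with
  | zero => simp
  | succ m ih =>
    rw [sum_Icc_succ_top (by omega), ih]
    push_cast
    ring

lemma sum_Icc_const_inv_natCast {n : ℕ} (hn : n ≠ 0) : ∑ _k ∈ Icc 1 n, 1 / (n : ℝ) = 1 := by
  simp [hn]

lemma sum_Icc_mul_one_sub_div {n : ℕ} (hn : n ≠ 0) :
    ∑ k ∈ Icc 1 n, 1 / (n : ℝ) * (1 - k / n) = ((n : ℝ) - 1) / (2 * n) := by
  have hn' : (n : ℝ) ≠ 0 := Nat.cast_ne_zero.mpr hn
  have hterm : ∀ k ∈ Icc 1 n, 1 / (n : ℝ) * (1 - k / n) = 1 / n - k / n ^ 2 := by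
    intro k _
    field_simp
  rw [sum_congr rfl hterm, sum_sub_distrib, sum_Icc_const_inv_natCast hn, ← sum_div,
    sum_Icc_natCast_eq]
  field_simp
  ring

lemma one_sub_div_nonneg_of_mem_Icc {n k : ℕ} (hk : k ∈ Icc 1 n) : 0 ≤ 1 - (k : ℝ) / n := by
  have hkn : (k : ℝ) ≤ n := by exact_mod_cast (mem_Icc.mp hk).2
  linarith [div_le_one_of_le₀ hkn (Nat.cast_nonneg n)]

theorem stmt_0 (n : ℕ) (hn : 2 ≤ n) (s : ℝ) (hs : 1 ≤ s) :
    ∑ k ∈ Finset.Icc 1 n, (1 / (n : ℝ)) * (1 - (k : ℝ) / n) ^ s ≥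
      (((n : ℝ) - 1) / (2 * n)) ^ s := by
  have hn0 : n ≠ 0 := by omega
  rw [ge_iff_le, ← sum_Icc_mul_one_sub_div hn0]
  exact Real.rpow_arith_mean_le_arith_mean_rpow _ _ _ (fun _ _ => by positivity)
    (sum_Icc_const_inv_natCast hn0) (fun _ hk => one_sub_div_nonneg_of_mem_Icc hk) hs
end

section
/- For every natural number n ≥ 1 and every real s ≥ 0, the quantity B(n,s) := ∑_{k=1}^{n} (1/n)·(1 − k/n)^s satisfies B(n,s) ≥ (1/(s+1))·(1 − 1/n)^{s+1}. -/
/-! The sum is a right Riemann sum of the decreasing function `y ↦ (1 - y) ^ s` on `[0, 1]`, so it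
dominates `∫_{1/n}^1 (1 - y) ^ s dy = (1 - 1/n) ^ (s + 1) / (s + 1)`. Avoiding integrals, this is a
telescoping bound: on each cell `[k/n, (k+1)/n]` the increment of the antiderivative is at most
`(1/n) (1 - k/n) ^ s`, by Bernoulli's inequality. -/

open Finset

namespace Real

theorem rpow_add_one_sub_rpow_add_one_le {s a b : ℝ} (hs : 0 ≤ s) (hb : 0 ≤ b) (hba : b ≤ a) :
    a ^ (s + 1) - b ^ (s + 1) ≤ (s + 1) * a ^ s * (a - b) := by
  obtain rfl | ha := (hb.trans hba).eq_or_lt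
  · rw [le_antisymm hba hb, zero_rpow (by positivity)]
    simp
  have hbernoulli : 1 + (s + 1) * (b / a - 1) ≤ (b / a) ^ (s + 1) := by
    simpa using one_add_mul_self_le_rpow_one_add (s := b / a - 1)
      (by linarith [div_nonneg hb ha.le]) (p := s + 1) (by linarith)
  have hpow : a ^ (s + 1) = a ^ s * a := by rw [rpow_add ha, rpow_one]
  calc a ^ (s + 1) - b ^ (s + 1)
      = a ^ (s + 1) * (1 - (b / a) ^ (s + 1)) := by
        rw [div_rpow hb ha.le, mul_sub, mul_div_cancel₀ _ (rpow_pos_of_pos ha _).ne', mul_one]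
    _ ≤ a ^ (s + 1) * ((s + 1) * (1 - b / a)) := by
        gcongr
        linarith
    _ = (s + 1) * a ^ s * (a - b) := by
        rw [hpow]
        field_simp

end Real

theorem rpow_add_one_sub_div_le_div_mul_rpow {s : ℝ} (hs : 0 ≤ s) {n k : ℕ} (hkn : k + 1 ≤ n) :
    ((1 - (k : ℝ) / n) ^ (s + 1) - (1 - ((k + 1 : ℕ) : ℝ) / n) ^ (s + 1)) / (s + 1) ≤
      1 / (n : ℝ) * (1 - (k : ℝ) / n) ^ s := by
  have hn : (0 : ℝ) < n := by exact_mod_cast (k.succ_pos.trans_le hkn)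
  have hb : 0 ≤ 1 - ((k + 1 : ℕ) : ℝ) / n := by
    rw [sub_nonneg, div_le_one hn]
    exact_mod_cast hkn
  have hgap : (1 - (k : ℝ) / n) - (1 - ((k + 1 : ℕ) : ℝ) / n) = 1 / n := by
    push_cast
    ring
  rw [div_le_iff₀ (by positivity)]
  calc _ ≤ (s + 1) * (1 - (k : ℝ) / n) ^ s * (1 / n) :=
        hgap ▸ Real.rpow_add_one_sub_rpow_add_one_le hs hb (by linarith [one_div_pos.mpr hn])
    _ = _ := by ring

theorem stmt_1 (n : ℕ) (hn : 1 ≤ n) (s : ℝ) (hs : 0 ≤ s) :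
    ∑ k ∈ Finset.Icc 1 n, (1 / (n : ℝ)) * (1 - (k : ℝ) / n) ^ s ≥
      (1 / (s + 1)) * (1 - 1 / (n : ℝ)) ^ (s + 1) := by
  have hn0 : (0 : ℝ) < n := by exact_mod_cast hn
  set G : ℕ → ℝ := fun k => (1 - (k : ℝ) / n) ^ (s + 1) / (s + 1)
  have hGn : G n = 0 := by
    simp [G, div_self hn0.ne', Real.zero_rpow (by positivity : s + 1 ≠ 0)]
  calc ∑ k ∈ Icc 1 n, 1 / (n : ℝ) * (1 - (k : ℝ) / n) ^ s
      ≥ ∑ k ∈ Ico 1 n, 1 / (n : ℝ) * (1 - (k : ℝ) / n) ^ s :=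
        sum_le_sum_of_subset_of_nonneg Ico_subset_Icc_self fun k hk _ => by
          have : (k : ℝ) ≤ n := by exact_mod_cast (mem_Icc.mp hk).2
          have : 0 ≤ 1 - (k : ℝ) / n := by rwa [sub_nonneg, div_le_one hn0]
          positivity
    _ ≥ ∑ k ∈ Ico 1 n, (G k - G (k + 1)) := sum_le_sum fun k hk => by
          simpa only [G, sub_div] using
            rpow_add_one_sub_div_le_div_mul_rpow hs (mem_Ico.mp hk).2
    _ = G 1 - G n := by
          simpa only [neg_sub_neg] using sum_Ico_sub (fun k => -G k) hn
    _ = (1 / (s + 1)) * (1 - 1 / (n : ℝ)) ^ (s + 1) := by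
          rw [hGn, sub_zero]
          simp [G, div_eq_inv_mul, mul_comm]
end

section
/- For every natural number n ≥ 2 and every real s ≥ 1, the quantity B(n,s) := ∑_{k=1}^{n} (1/n)·(1 − k/n)^s satisfies B(n,s) ≥ max( ((n−1)/(2n))^s , (1/(s+1))·(1 − 1/n)^{s+1} ). -/
theorem stmt_2 (n : ℕ) (hn : 2 ≤ n) (s : ℝ) (hs : 1 ≤ s) :
    ∑ k ∈ Finset.Icc 1 n, (1 / (n : ℝ)) * (1 - (k : ℝ) / n) ^ s ≥
      max ((((n : ℝ) - 1) / (2 * n)) ^ s)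
        ((1 / (s + 1)) * (1 - 1 / (n : ℝ)) ^ (s + 1)) := by
  have hn0 : (0:ℝ) < n := by
    have : 0 < n := by omega
    exact_mod_cast this
  have hn1 : (1:ℝ) ≤ n := by
    have : 1 ≤ n := by omega
    exact_mod_cast this
  have hcard : (Finset.Icc 1 n).card = n := by
    rw [Nat.card_Icc]; omega
  have hz : ∀ k ∈ Finset.Icc 1 n, (0:ℝ) ≤ 1 - (k:ℝ)/n := by
    intro k hk
    rw [Finset.mem_Icc] at hk
    have hk' : (k:ℝ) ≤ n := by exact_mod_cast hk.2
    rw [sub_nonneg, div_le_one hn0]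
    exact hk'
  -- Gauss sum
  have hId : ∑ k ∈ Finset.Icc 1 n, (k:ℝ) = n*(n+1)/2 := by
    have h1 : ∑ k ∈ Finset.Icc 1 n, (k:ℝ) = ∑ k ∈ Finset.range (n+1), (k:ℝ) := by
      apply Finset.sum_subset
      · intro k hk
        simp only [Finset.mem_Icc] at hk
        simp only [Finset.mem_range]; omega
      · intro k hk hk'
        simp only [Finset.mem_range] at hk
        simp only [Finset.mem_Icc] at hk'
        have : k = 0 := by omega
        simp [this]
    have h2 : (∑ i ∈ Finset.range (n+1), i) * 2 = (n+1) * n := by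
      rw [Finset.sum_range_id_mul_two, Nat.add_sub_cancel]
    have h3 : ((∑ i ∈ Finset.range (n+1), i : ℕ) : ℝ) * 2 = ((n:ℝ)+1) * n := by
      exact_mod_cast h2
    push_cast at h3
    rw [h1]
    linarith
  have hsum1 : ∑ k ∈ Finset.Icc 1 n, (1/(n:ℝ)) * (1 - (k:ℝ)/n) = ((n:ℝ)-1)/(2*n) := by
    have h1 : ∀ k : ℕ, (1/(n:ℝ)) * (1 - (k:ℝ)/n) = 1/n - (k:ℝ) * (1/(n*n)) := by
      intro k; field_simp
    simp only [h1]
    rw [Finset.sum_sub_distrib, Finset.sum_const, ← Finset.sum_mul, hId, hcard,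
      nsmul_eq_mul]
    field_simp
    ring
  -- Jensen bound
  have hjen := Real.rpow_arith_mean_le_arith_mean_rpow (Finset.Icc 1 n)
      (fun _ => 1/(n:ℝ)) (fun k => 1 - (k:ℝ)/n) (fun i _ => by positivity)
      (by rw [Finset.sum_const, hcard, nsmul_eq_mul]; field_simp) hz hs
  rw [hsum1] at hjen
  have hbound1 : (((n:ℝ)-1)/(2*n)) ^ s ≤ ∑ k ∈ Finset.Icc 1 n, (1/(n:ℝ)) * (1 - (k:ℝ)/n) ^ s := by
    exact hjen
  -- Integral bound
  have hcastn1 : ((n-1 : ℕ) : ℝ) = (n:ℝ) - 1 := by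
    have h1 : (1:ℕ) ≤ n := by omega
    push_cast [h1]
    ring
  have hanti : AntitoneOn (fun x : ℝ => (1 - x/(n:ℝ)) ^ s) (Set.Icc (1:ℝ) (1 + ((n-1 : ℕ):ℝ))) := by
    intro x hx y hy hxy
    have hx1 : 1 ≤ x := hx.1
    have hy2 : y ≤ (n:ℝ) := by
      have := hy.2
      rw [hcastn1] at this
      linarith
    apply Real.rpow_le_rpow
    · rw [sub_nonneg, div_le_one hn0]; exact hy2
    · have : x / (n:ℝ) ≤ y / n := by gcongr
      linarith
    · linarith
  have hint := hanti.integral_le_sum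
  -- compute the sum on the RHS of hint
  have hsumeq : ∑ i ∈ Finset.range (n-1), (1 - ((1:ℝ) + (i:ℕ))/(n:ℝ)) ^ s
      = ∑ k ∈ Finset.Ico 1 n, (1 - (k:ℝ)/n) ^ s := by
    rw [Finset.sum_Ico_eq_sum_range]
    apply Finset.sum_congr rfl
    intro i _
    push_cast
    ring_nf
  -- compute the integral
  have hke : (1:ℝ) + ((n-1:ℕ):ℝ) = (n:ℝ) := by rw [hcastn1]; ring
  have hintval : (∫ x in (1:ℝ)..(1 + ((n-1:ℕ):ℝ)), (1 - x/(n:ℝ)) ^ s)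
      = (n:ℝ) * ((1 - 1/(n:ℝ)) ^ (s+1) / (s+1)) := by
    rw [hke]
    have h1 : (∫ x in (1:ℝ)..(n:ℝ), (1 - x/(n:ℝ)) ^ s)
        = (n:ℝ) • ∫ u in (1/(n:ℝ))..((n:ℝ)/(n:ℝ)), (1 - u) ^ s := by
      exact intervalIntegral.integral_comp_div (fun u => (1 - u)^s) hn0.ne'
    rw [h1, div_self hn0.ne']
    have h2 : (∫ u in (1/(n:ℝ))..(1:ℝ), ((1:ℝ) - u) ^ s)
        = ∫ t in (1 - (1:ℝ))..(1 - 1/(n:ℝ)), t ^ s := by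
      exact intervalIntegral.integral_comp_sub_left (fun t => t ^ s) 1
    rw [h2]
    rw [integral_rpow (Or.inl (by linarith))]
    have hs1 : s + 1 ≠ 0 := by linarith
    rw [show (1:ℝ) - 1 = 0 by ring, Real.zero_rpow hs1]
    simp [smul_eq_mul]
  rw [hintval, hsumeq] at hint
  -- relate the full sum to the Ico sum
  have hsplit : ∑ k ∈ Finset.Icc 1 n, (1/(n:ℝ)) * (1 - (k:ℝ)/n) ^ s
      = (1/(n:ℝ)) * ∑ k ∈ Finset.Ico 1 n, (1 - (k:ℝ)/n) ^ s := by
    rw [Finset.mul_sum]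
    rw [show Finset.Icc 1 n = Finset.Ico 1 (n+1) by rw [Finset.Ico_add_one_right_eq_Icc]]
    rw [Finset.sum_Ico_succ_top (by omega)]
    have : (1 - (n:ℝ)/n) ^ s = 0 := by
      rw [div_self hn0.ne', sub_self, Real.zero_rpow (by linarith)]
    rw [this]
    ring
  have hbound2 : (1/(s+1)) * (1 - 1/(n:ℝ)) ^ (s+1)
      ≤ ∑ k ∈ Finset.Icc 1 n, (1/(n:ℝ)) * (1 - (k:ℝ)/n) ^ s := by
    rw [hsplit]
    have := mul_le_mul_of_nonneg_left hint (by positivity : (0:ℝ) ≤ 1/(n:ℝ))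
    calc (1/(s+1)) * (1 - 1/(n:ℝ)) ^ (s+1)
        = (1/(n:ℝ)) * ((n:ℝ) * ((1 - 1/(n:ℝ)) ^ (s+1) / (s+1))) := by
          field_simp
      _ ≤ _ := this
  rw [ge_iff_le]
  exact max_le hbound1 hbound2
end

section
/- For every natural number n ≥ 2 and every real s ≥ 1, with B(n,s) := ∑_{k=1}^{n} (1/n)·(1 − k/n)^s one has B(n,s) > 0 and B(n,s)⁻¹ ≤ min( (2n/(n−1))^s , (s+1)·(n/(n−1))^{s+1} ). -/
open Finset

/-!
Reflecting `k ↦ n - k` turns `B(n,s)` into the left Riemann sum `(1/n) ∑_{j<n} (j/n)^s` of `x^s`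
on `[0,1]`. Jensen's inequality for the convex `x^s` (uniform weights, mean `(n-1)/(2n)`) gives
`B ≥ ((n-1)/(2n))^s`, and comparing `∑_{j≤m} j^s` with `∫_0^m x^s` gives
`B ≥ ((n-1)/n)^(s+1)/(s+1)`. Both lower bounds are positive, so inverting them gives the claim.
-/

theorem sum_Icc_one_sub_div_eq_sum_range {M : Type*} [AddCommMonoid M] (n : ℕ) (f : ℝ → M) :
    ∑ k ∈ Icc 1 n, f (1 - (k : ℝ) / n) = ∑ j ∈ range n, f ((j : ℝ) / n) := by
  refine sum_nbij' (fun k => n - k) (fun j => n - j) ?_ ?_ ?_ ?_ ?_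
  · intro k hk
    simp only [mem_Icc, mem_range] at hk ⊢
    omega
  · intro j hj
    simp only [mem_Icc, mem_range] at hj ⊢
    omega
  · intro k hk
    simp only [mem_Icc] at hk
    omega
  · intro j hj
    simp only [mem_range] at hj
    omega
  · intro k hk
    obtain ⟨hk1, hkn⟩ := mem_Icc.1 hk
    have hn : (n : ℝ) ≠ 0 := by norm_cast; omega
    rw [Nat.cast_sub hkn, sub_div, div_self hn]

theorem rpow_sub_one_div_two_mul_le_sum_range {n : ℕ} (hn : n ≠ 0) {s : ℝ} (hs : 1 ≤ s) :
    (((n : ℝ) - 1) / (2 * n)) ^ s ≤ ∑ j ∈ range n, 1 / (n : ℝ) * ((j : ℝ) / n) ^ s := by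
  have hn' : (n : ℝ) ≠ 0 := by exact_mod_cast hn
  have hmean : ∑ j ∈ range n, 1 / (n : ℝ) * ((j : ℝ) / n) = ((n : ℝ) - 1) / (2 * n) := by
    have hgauss : (∑ j ∈ range n, (j : ℝ)) * 2 = n * (n - 1) := by
      have := sum_range_id_mul_two n
      rw [← Nat.cast_inj (R := ℝ)] at this
      push_cast [Nat.cast_sub (Nat.one_le_iff_ne_zero.2 hn)] at this
      exact this
    rw [← mul_sum, ← sum_div]
    field_simp
    linear_combination hgauss
  rw [← hmean]
  exact Real.rpow_arith_mean_le_arith_mean_rpow _ _ _ (fun _ _ => by positivity)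
    (by simp [hn']) (fun _ _ => by positivity) hs

theorem rpow_add_one_div_add_one_le_sum_range_rpow {s : ℝ} (hs : 0 ≤ s) (m : ℕ) :
    (m : ℝ) ^ (s + 1) / (s + 1) ≤ ∑ j ∈ range (m + 1), (j : ℝ) ^ s := by
  have hmono : MonotoneOn (fun x : ℝ => x ^ s) (Set.Icc 0 (0 + m)) :=
    fun x hx y _ hxy => Real.rpow_le_rpow hx.1 hxy hs
  calc (m : ℝ) ^ (s + 1) / (s + 1) = ∫ x in (0 : ℝ)..m, x ^ s := by
        rw [integral_rpow (.inl (by linarith)), Real.zero_rpow (by linarith), sub_zero]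
    _ ≤ ∑ i ∈ range m, ((i + 1 : ℕ) : ℝ) ^ s := by simpa using hmono.integral_le_sum
    _ ≤ ∑ i ∈ range m, ((i + 1 : ℕ) : ℝ) ^ s + ((0 : ℕ) : ℝ) ^ s :=
        le_add_of_nonneg_right (by positivity)
    _ = ∑ j ∈ range (m + 1), (j : ℝ) ^ s :=
        (sum_range_succ' (fun j : ℕ => (j : ℝ) ^ s) m).symm

theorem rpow_sub_one_div_div_add_one_le_sum_range {n : ℕ} (hn : n ≠ 0) {s : ℝ}
    (hs : 0 ≤ s) :
    (((n : ℝ) - 1) / n) ^ (s + 1) / (s + 1) ≤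
      ∑ j ∈ range n, 1 / (n : ℝ) * ((j : ℝ) / n) ^ s := by
  obtain ⟨m, rfl⟩ := Nat.exists_eq_succ_of_ne_zero hn
  have hm : (0 : ℝ) < m + 1 := by positivity
  have hsum : ∑ j ∈ range (m + 1), 1 / ((m + 1 : ℕ) : ℝ) * ((j : ℝ) / (m + 1 : ℕ)) ^ s
      = (∑ j ∈ range (m + 1), (j : ℝ) ^ s) / ((m : ℝ) + 1) ^ (s + 1) := by
    rw [sum_div]
    refine sum_congr rfl fun j _ => ?_
    push_cast
    rw [Real.div_rpow (by positivity) hm.le, Real.rpow_add_one hm.ne']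
    field_simp
  rw [hsum, Nat.cast_add_one, add_sub_cancel_right,
    Real.div_rpow (by positivity) hm.le, div_div, mul_comm, ← div_div]
  gcongr
  exact rpow_add_one_div_add_one_le_sum_range_rpow hs m

theorem stmt_3 (n : ℕ) (hn : 2 ≤ n) (s : ℝ) (hs : 1 ≤ s) :
    0 < ∑ k ∈ Finset.Icc 1 n, (1 / (n : ℝ)) * (1 - (k : ℝ) / n) ^ s ∧
    (∑ k ∈ Finset.Icc 1 n, (1 / (n : ℝ)) * (1 - (k : ℝ) / n) ^ s)⁻¹ ≤
      min ((2 * (n : ℝ) / ((n : ℝ) - 1)) ^ s)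
        ((s + 1) * ((n : ℝ) / ((n : ℝ) - 1)) ^ (s + 1)) := by
  have hn0 : n ≠ 0 := by omega
  have hn1 : (1 : ℝ) < n := by exact_mod_cast hn
  rw [sum_Icc_one_sub_div_eq_sum_range n (fun x => 1 / (n : ℝ) * x ^ s)]
  have hjensen := rpow_sub_one_div_two_mul_le_sum_range hn0 hs
  have hintegral := rpow_sub_one_div_div_add_one_le_sum_range hn0 (s := s) (by linarith)
  have hpos₁ : 0 < (((n : ℝ) - 1) / (2 * n)) ^ s := Real.rpow_pos_of_pos (by positivity) _
  have hpos₂ : 0 < (((n : ℝ) - 1) / n) ^ (s + 1) / (s + 1) := by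
    have := Real.rpow_pos_of_pos (by positivity : (0 : ℝ) < ((n : ℝ) - 1) / n) (s + 1)
    positivity
  refine ⟨hpos₁.trans_le hjensen, le_min ?_ ?_⟩
  · calc _ ≤ ((((n : ℝ) - 1) / (2 * n)) ^ s)⁻¹ := inv_anti₀ hpos₁ hjensen
      _ = _ := by rw [← Real.inv_rpow (by positivity), inv_div]
  · calc _ ≤ ((((n : ℝ) - 1) / n) ^ (s + 1) / (s + 1))⁻¹ := inv_anti₀ hpos₂ hintegral
      _ = _ := by rw [inv_div, div_eq_mul_inv, ← Real.inv_rpow (by positivity), inv_div]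
end

section
/- Let f, h, q, w be real numbers and set D := h + w + f + h·q + q·w + f·w, assumed nonzero. Define the row vector π := (1/D)·(h + w, f, q·h + q·w + f·w) in ℝ³ and the 3×3 real matrix P with rows (1 − f − q, f, q), (h, 1 − h − w, w), and (1, 0, 0). Then π is a left fixed vector of P, i.e. the vector-matrix product π ᵥ* P equals π, and the entries of π sum to 1. -/
open Matrix

theorem vecMul_normalize_eq_self_and_sum_eq_one {n K : Type*} [Fintype n] [Field K]
    (P : Matrix n n K) (v : n → K) (hv : v ᵥ* P = v) (hs : ∑ i, v i ≠ 0) :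
    ((1 / ∑ i, v i) • v) ᵥ* P = (1 / ∑ i, v i) • v ∧ ∑ i, ((1 / ∑ i, v i) • v) i = 1 := by
  refine ⟨by rw [smul_vecMul, hv], ?_⟩
  simp only [Pi.smul_apply, smul_eq_mul, ← Finset.mul_sum]
  exact one_div_mul_cancel hs

theorem weights_vecMul_transition (f h q w : ℝ) :
    ![h + w, f, q * h + q * w + f * w] ᵥ* !![1 - f - q, f, q; h, 1 - h - w, w; 1, 0, 0] =
      ![h + w, f, q * h + q * w + f * w] := by
  ext i
  fin_cases i <;> simp [vecMul, dotProduct, Fin.sum_univ_three] <;> ring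

theorem stmt_5 (f h q w : ℝ) (hD : h + w + f + h * q + q * w + f * w ≠ 0) :
    let D : ℝ := h + w + f + h * q + q * w + f * w
    let π : Fin 3 → ℝ := (1 / D) • ![h + w, f, q * h + q * w + f * w]
    let P : Matrix (Fin 3) (Fin 3) ℝ :=
      !![1 - f - q, f, q; h, 1 - h - w, w; 1, 0, 0]
    π ᵥ* P = π ∧ ∑ i, π i = 1 := by
  intro D π P
  have hsum : ∑ i, ![h + w, f, q * h + q * w + f * w] i = D := by
    simp only [Fin.sum_univ_three, cons_val_zero, cons_val_one, cons_val, D]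
    ring
  have hnormalized := vecMul_normalize_eq_self_and_sum_eq_one P _ (weights_vecMul_transition f h q w)
    (hsum ▸ hD)
  rwa [hsum] at hnormalized
end

section
/- Let N ≥ 1 and n be natural numbers, T > 0 a real number, d : Fin N → ℝ with d i ≥ 0 for all i, and ρ, a : Fin n → ℝ with ρ j ≥ 0 and 0 < a j ≤ 1 for all j. Then ∑_{i=1}^{N} ∑_{j=1}^{n} ρ j · (a j)^{d i / T} ≥ N · ∑_{j=1}^{n} ρ j · (a j)^{x̄/T}, where x̄ := (∑_{i=1}^{N} d i)/N and the powers are real powers (rpow). -/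
open Finset

theorem ConvexOn.card_mul_map_sum_div_card_le {ι : Type*} [Fintype ι] {f : ℝ → ℝ}
    (hf : ConvexOn ℝ Set.univ f) (x : ι → ℝ) :
    Fintype.card ι * f ((∑ i, x i) / Fintype.card ι) ≤ ∑ i, f (x i) := by
  rcases isEmpty_or_nonempty ι with hι | hι
  · simp
  have hcard : (0 : ℝ) < Fintype.card ι := by exact_mod_cast Fintype.card_pos
  have jensen := hf.map_sum_le (t := univ) (w := fun _ => (Fintype.card ι : ℝ)⁻¹) (p := x)
    (fun _ _ => by positivity) (by simp [card_univ, hcard.ne'])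
    (fun _ _ => Set.mem_univ _)
  simp only [smul_eq_mul, ← mul_sum] at jensen
  rw [div_eq_inv_mul]
  calc _ ≤ Fintype.card ι * ((Fintype.card ι : ℝ)⁻¹ * ∑ i, f (x i)) := by gcongr
    _ = ∑ i, f (x i) := by field_simp

theorem Real.convexOn_rpow_left_div {b : ℝ} (hb : 0 < b) (c : ℝ) :
    ConvexOn ℝ Set.univ fun x : ℝ => b ^ (x / c) := by
  have hbc : ∀ x : ℝ, b ^ (x / c) = (b ^ c⁻¹) ^ x := fun x => by
    rw [← Real.rpow_mul hb.le, div_eq_inv_mul]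
  simpa only [hbc] using convexOn_rpow_left (Real.rpow_pos_of_pos hb c⁻¹)

theorem stmt_6_general (N n : ℕ) (T : ℝ)
    (d : Fin N → ℝ)
    (ρ a : Fin n → ℝ) (hρ : ∀ j, 0 ≤ ρ j) (ha : ∀ j, 0 < a j ∧ a j ≤ 1) :
    ∑ i, ∑ j, ρ j * a j ^ (d i / T) ≥
      (N : ℝ) * ∑ j, ρ j * a j ^ (((∑ i, d i) / N) / T) := by
  rw [sum_comm, mul_sum]
  refine sum_le_sum fun j _ => ?_
  have jensen := (Real.convexOn_rpow_left_div (ha j).1 T).card_mul_map_sum_div_card_le d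
  rw [Fintype.card_fin] at jensen
  rw [← mul_sum, mul_left_comm]
  exact mul_le_mul_of_nonneg_left jensen (hρ j)

theorem stmt_6 (N n : ℕ) (hN : 1 ≤ N) (T : ℝ) (hT : 0 < T)
    (d : Fin N → ℝ) (hd : ∀ i, 0 ≤ d i)
    (ρ a : Fin n → ℝ) (hρ : ∀ j, 0 ≤ ρ j) (ha : ∀ j, 0 < a j ∧ a j ≤ 1) :
    ∑ i, ∑ j, ρ j * a j ^ (d i / T) ≥
      (N : ℝ) * ∑ j, ρ j * a j ^ (((∑ i, d i) / N) / T) :=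
  stmt_6_general N n T d ρ a hρ ha
end

section
/- Let (Ω, μ) be a probability space, let m : Ω → ℝ be integrable with m(ω) ≥ 0 almost everywhere and ∫ m dμ ≤ s for a real s ≥ 0. Let n be a natural number and ρ, a : Fin n → ℝ with ρ k ≥ 0 and 0 < a k ≤ 1 for all k. Then ∫ (∑_{k=1}^{n} ρ k · (a k)^{m(ω)}) dμ ≥ ∑_{k=1}^{n} ρ k · (a k)^s, where the powers are real powers (rpow). -/
open MeasureTheory

lemma aux_rpow_int {Ω : Type*} [MeasurableSpace Ω] (μ : Measure Ω) [IsProbabilityMeasure μ]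
    (m : Ω → ℝ) (hm : Integrable m μ) (hm0 : ∀ᵐ ω ∂μ, 0 ≤ m ω)
    {c : ℝ} (hc0 : 0 < c) (hc1 : c ≤ 1) : Integrable (fun ω => c ^ m ω) μ := by
  apply Integrable.mono' (integrable_const (1 : ℝ))
  · have he : (fun ω => c ^ m ω) = fun ω => Real.exp (Real.log c * m ω) :=
      funext fun ω => Real.rpow_def_of_pos hc0 _
    rw [he]
    exact Real.continuous_exp.comp_aestronglyMeasurable (hm.aestronglyMeasurable.const_mul _)
  · filter_upwards [hm0] with ω hω
    rw [Real.norm_eq_abs, abs_of_nonneg (Real.rpow_nonneg hc0.le _)]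
    exact Real.rpow_le_one hc0.le hc1 hω

lemma aux_jensen {Ω : Type*} [MeasurableSpace Ω] (μ : Measure Ω) [IsProbabilityMeasure μ]
    (m : Ω → ℝ) (hm : Integrable m μ) (hm0 : ∀ᵐ ω ∂μ, 0 ≤ m ω)
    (s : ℝ) (hs : 0 ≤ s) (hms : ∫ ω, m ω ∂μ ≤ s)
    {c : ℝ} (hc0 : 0 < c) (hc1 : c ≤ 1) : c ^ s ≤ ∫ ω, c ^ m ω ∂μ := by
  have hf : Integrable (fun ω => Real.log c * m ω) μ := hm.const_mul _
  have hconv : ConvexOn ℝ Set.univ Real.exp := convexOn_exp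
  have hj := hconv.map_integral_le (f := fun ω => Real.log c * m ω)
    Real.continuous_exp.continuousOn isClosed_univ
    (Filter.Eventually.of_forall fun _ => Set.mem_univ _) hf ?_
  · have hint : ∫ ω, Real.log c * m ω ∂μ = Real.log c * ∫ ω, m ω ∂μ :=
      integral_const_mul _ _
    have hlog : Real.log c ≤ 0 := Real.log_nonpos hc0.le hc1
    have h1 : Real.log c * s ≤ Real.log c * ∫ ω, m ω ∂μ :=
      mul_le_mul_of_nonpos_left hms hlog
    calc c ^ s = Real.exp (Real.log c * s) := Real.rpow_def_of_pos hc0 s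
      _ ≤ Real.exp (Real.log c * ∫ ω, m ω ∂μ) := Real.exp_le_exp.mpr h1
      _ = Real.exp (∫ ω, Real.log c * m ω ∂μ) := by rw [hint]
      _ ≤ ∫ ω, Real.exp (Real.log c * m ω) ∂μ := hj
      _ = ∫ ω, c ^ m ω ∂μ := by
          refine integral_congr_ae (Filter.Eventually.of_forall fun ω => ?_)
          simp only [Real.rpow_def_of_pos hc0]
  · have := aux_rpow_int μ m hm hm0 hc0 hc1
    refine this.congr (Filter.Eventually.of_forall fun ω => ?_)
    simp only [Function.comp, Real.rpow_def_of_pos hc0]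

theorem stmt_12 {Ω : Type*} [MeasurableSpace Ω] (μ : Measure Ω) [IsProbabilityMeasure μ]
    (m : Ω → ℝ) (hm : Integrable m μ) (hm0 : ∀ᵐ ω ∂μ, 0 ≤ m ω)
    (s : ℝ) (hs : 0 ≤ s) (hms : ∫ ω, m ω ∂μ ≤ s)
    (n : ℕ) (ρ a : Fin n → ℝ) (hρ : ∀ k, 0 ≤ ρ k) (ha : ∀ k, 0 < a k ∧ a k ≤ 1) :
    ∫ ω, (∑ k, ρ k * a k ^ m ω) ∂μ ≥ ∑ k, ρ k * a k ^ s := by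
  have hint : ∀ k : Fin n, Integrable (fun ω => ρ k * a k ^ m ω) μ := fun k =>
    (aux_rpow_int μ m hm hm0 (ha k).1 (ha k).2).const_mul _
  rw [integral_finset_sum _ (fun k _ => hint k)]
  refine Finset.sum_le_sum fun k _ => ?_
  rw [integral_const_mul]
  exact mul_le_mul_of_nonneg_left (aux_jensen μ m hm hm0 s hs hms (ha k).1 (ha k).2) (hρ k)
end
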